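/- arXiv:1403.8129 — 4 statements merged into one kernel-verified Lean document; each statement's English description precedes it below -/
import Mathlib

section
/- Let Q ⊆ A ⊆ Z/pZ with A nonempty, suppose ‖χ_A‖_A ≤ K, and let k be a positive integer. Then T_k(Q) ≥ |Q|^{2k} / (|A| K^{2k−2}). -/
open Finset

noncomputable def hatChi {p : ℕ} [NeZero p] (A : Finset (ZMod p)) (γ : ZMod p) : ℂ :=
  (1 / (p : ℂ)) * ∑ x ∈ A, Complex.exp (2 * Real.pi * Complex.I * ((x * γ).val : ℂ) / p)

noncomputable def wienerNorm {p : ℕ} [NeZero p] (A : Finset (ZMod p)) : ℝ :=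
  ∑ γ : ZMod p, ‖hatChi A γ‖

noncomputable def Tk {p : ℕ} (Q : Finset (ZMod p)) (k : ℕ) : ℕ :=
  Nat.card {f : (Fin k → ZMod p) × (Fin k → ZMod p) //
    (∀ i, f.1 i ∈ Q) ∧ (∀ i, f.2 i ∈ Q) ∧ ∑ i, f.1 i = ∑ i, f.2 i}

/-!
Write `a γ = |1̂_Q(γ)|` and `b γ = |1̂_A(γ)|`. Orthogonality of characters gives
`∑ a b ≥ |∑ 1̂_Q · conj 1̂_A| = |Q|/p` (as `Q ⊆ A`), `∑ b² = |A|/p` and, since `1̂_Q(γ)^k` is the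
character sum over `Q^k` of `(x₁ + ⋯ + x_k) γ`, `∑ a^{2k} = T_k(Q)/p^{2k-1}`.
Hölder's inequality `(∑ a b)^{2k} ≤ (∑ b)^{2k-2} (∑ b²) (∑ a^{2k})` together with `∑ b ≤ K`
then yields the bound.
-/

lemma pow_sum_mul_le_sum_pow_mul_sum_mul_pow {ι : Type*} (s : Finset ι) (w f : ι → ℝ)
    (hw : ∀ i, 0 ≤ w i) (hf : ∀ i, 0 ≤ f i) (n : ℕ) :
    (∑ i ∈ s, w i * f i) ^ (n + 1) ≤ (∑ i ∈ s, w i) ^ n * ∑ i ∈ s, w i * f i ^ (n + 1) := by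
  have hW : 0 ≤ ∑ i ∈ s, w i := sum_nonneg fun i _ => hw i
  have hWf : 0 ≤ ∑ i ∈ s, w i * f i ^ (n + 1) :=
    sum_nonneg fun i _ => mul_nonneg (hw i) (pow_nonneg (hf i) _)
  have hn : (1 : ℝ) ≤ (n + 1 : ℕ) := by norm_cast; omega
  have hn0 : ((n + 1 : ℕ) : ℝ) ≠ 0 := by positivity
  have holder := Real.inner_le_weight_mul_Lp_of_nonneg s hn w f hw hf
  simp only [Real.rpow_natCast] at holder
  calc (∑ i ∈ s, w i * f i) ^ (n + 1)
      ≤ ((∑ i ∈ s, w i) ^ (1 - ((n + 1 : ℕ) : ℝ)⁻¹) *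
          (∑ i ∈ s, w i * f i ^ (n + 1)) ^ ((n + 1 : ℕ) : ℝ)⁻¹) ^ (n + 1) :=
        pow_le_pow_left₀ (sum_nonneg fun i _ => mul_nonneg (hw i) (hf i)) holder _
    _ = (∑ i ∈ s, w i) ^ n * ∑ i ∈ s, w i * f i ^ (n + 1) := by
        rw [mul_pow, ← Real.rpow_mul_natCast hW, ← Real.rpow_mul_natCast hWf,
          inv_mul_cancel₀ hn0, Real.rpow_one, sub_mul, one_mul, inv_mul_cancel₀ hn0]
        push_cast
        rw [add_sub_cancel_right, Real.rpow_natCast]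

lemma pow_sum_mul_le_sum_pow_mul_sum_sq_mul_sum_pow {ι : Type*} (s : Finset ι) (a b : ι → ℝ)
    (ha : ∀ i, 0 ≤ a i) (hb : ∀ i, 0 ≤ b i) {k : ℕ} (hk : 0 < k) :
    (∑ i ∈ s, a i * b i) ^ (2 * k) ≤
      (∑ i ∈ s, b i) ^ (2 * k - 2) * (∑ i ∈ s, b i ^ 2) * ∑ i ∈ s, a i ^ (2 * k) := by
  obtain ⟨m, rfl⟩ : ∃ m, k = m + 1 := ⟨k - 1, by omega⟩
  have jensen := pow_sum_mul_le_sum_pow_mul_sum_mul_pow s b a hb ha m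
  have cauchy := sum_mul_sq_le_sq_mul_sq s b (fun i => a i ^ (m + 1))
  calc (∑ i ∈ s, a i * b i) ^ (2 * (m + 1))
      = ((∑ i ∈ s, b i * a i) ^ (m + 1)) ^ 2 := by simp_rw [mul_comm (a _), ← pow_mul']
    _ ≤ ((∑ i ∈ s, b i) ^ m * ∑ i ∈ s, b i * a i ^ (m + 1)) ^ 2 :=
        pow_le_pow_left₀ (pow_nonneg (sum_nonneg fun i _ => mul_nonneg (hb i) (ha i)) _) jensen 2
    _ ≤ (∑ i ∈ s, b i) ^ (2 * m) * ((∑ i ∈ s, b i ^ 2) * ∑ i ∈ s, (a i ^ (m + 1)) ^ 2) := by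
        rw [mul_pow, ← pow_mul']
        exact mul_le_mul_of_nonneg_left cauchy (pow_nonneg (sum_nonneg fun i _ => hb i) _)
    _ = _ := by
        rw [show 2 * (m + 1) - 2 = 2 * m by omega, mul_assoc]
        simp_rw [← pow_mul, mul_comm (m + 1) 2]

lemma card_filter_fst_eq_snd {α : Type*} [DecidableEq α] (s t : Finset α) :
    #{x ∈ s ×ˢ t | x.1 = x.2} = #(s ∩ t) := by
  rw [card_filter, sum_product]
  simp [sum_ite_eq]

open ComplexConjugate

lemma AddChar.map_sum_eq_prod {A M ι : Type*} [AddCommMonoid A] [CommMonoid M]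
    (ψ : AddChar A M) (s : Finset ι) (f : ι → A) :
    ψ (∑ i ∈ s, f i) = ∏ i ∈ s, ψ (f i) := by
  induction s using Finset.cons_induction with
  | empty => simp
  | cons a s _ ih => rw [sum_cons, prod_cons, AddChar.map_add_eq_mul, ih]

namespace ZMod

variable {p : ℕ} [NeZero p]

lemma conj_stdAddChar (a : ZMod p) : conj (stdAddChar a) = stdAddChar (-a) := by
  rw [stdAddChar_apply, ← Circle.coe_inv_eq_conj, stdAddChar_apply, AddChar.map_neg_eq_inv]

lemma sum_stdAddChar_mul (t : ZMod p) :
    ∑ γ : ZMod p, stdAddChar (t * γ) = if t = 0 then (p : ℂ) else 0 := by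
  simp_rw [mul_comm t]
  rw [AddChar.sum_mulShift t (isPrimitive_stdAddChar p), card, Nat.cast_ite, Nat.cast_zero]

lemma sum_charSum_mul_conj_charSum {ι κ : Type*} (s : Finset ι) (t : Finset κ)
    (g : ι → ZMod p) (h : κ → ZMod p) :
    ∑ γ : ZMod p, (∑ i ∈ s, stdAddChar (g i * γ)) * conj (∑ j ∈ t, stdAddChar (h j * γ)) =
      p * #{x ∈ s ×ˢ t | g x.1 = h x.2} := by
  have hpair (γ : ZMod p) (i : ι) (j : κ) :
      stdAddChar (g i * γ) * conj (stdAddChar (h j * γ)) = stdAddChar ((g i - h j) * γ) := by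
    rw [conj_stdAddChar, ← AddChar.map_add_eq_mul, sub_mul, sub_eq_add_neg]
  calc _ = ∑ x ∈ s ×ˢ t, ∑ γ : ZMod p, stdAddChar ((g x.1 - h x.2) * γ) := by
        rw [sum_comm]
        simp_rw [map_sum, sum_mul_sum, hpair, sum_product]
    _ = _ := by
        simp_rw [sum_stdAddChar_mul, sub_eq_zero]
        rw [sum_ite, sum_const_zero, add_zero, sum_const, nsmul_eq_mul, mul_comm]

end ZMod

section hatChi

variable {p : ℕ} [NeZero p]

lemma hatChi_eq_sum_stdAddChar (A : Finset (ZMod p)) (γ : ZMod p) :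
    hatChi A γ = (p : ℂ)⁻¹ * ∑ x ∈ A, ZMod.stdAddChar (x * γ) := by
  simp_rw [hatChi, one_div, ZMod.stdAddChar_apply, ZMod.toCircle_apply]

lemma sum_hatChi_mul_conj (Q A : Finset (ZMod p)) :
    ∑ γ : ZMod p, hatChi Q γ * conj (hatChi A γ) = #(Q ∩ A) / p := by
  have hp : (p : ℂ) ≠ 0 := NeZero.ne _
  simp_rw [hatChi_eq_sum_stdAddChar, map_mul, map_inv₀, Complex.conj_natCast, mul_mul_mul_comm]
  have h := ZMod.sum_charSum_mul_conj_charSum Q A id id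
  simp only [id] at h
  rw [← mul_sum, h, card_filter_fst_eq_snd]
  field_simp

lemma sum_norm_hatChi_sq (A : Finset (ZMod p)) : ∑ γ : ZMod p, ‖hatChi A γ‖ ^ 2 = #A / p := by
  have h := sum_hatChi_mul_conj A A
  simp_rw [Complex.mul_conj', inter_self] at h
  rw [← Complex.ofReal_inj]
  push_cast
  exact h

lemma card_div_le_sum_norm_hatChi_mul {Q A : Finset (ZMod p)} (hQA : Q ⊆ A) :
    #Q / p ≤ ∑ γ : ZMod p, ‖hatChi Q γ‖ * ‖hatChi A γ‖ := by
  have h := congrArg norm (sum_hatChi_mul_conj Q A)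
  rw [inter_eq_left.2 hQA, norm_div, Complex.norm_natCast, Complex.norm_natCast] at h
  calc (#Q / p : ℝ) = ‖∑ γ : ZMod p, hatChi Q γ * conj (hatChi A γ)‖ := h.symm
    _ ≤ _ := by
        simpa only [norm_mul, Complex.norm_conj] using
          norm_sum_le univ fun γ => hatChi Q γ * conj (hatChi A γ)

lemma pow_mul_hatChi_pow (Q : Finset (ZMod p)) (k : ℕ) (γ : ZMod p) :
    (p : ℂ) ^ k * hatChi Q γ ^ k =
      ∑ f ∈ Fintype.piFinset fun _ : Fin k => Q, ZMod.stdAddChar ((∑ i, f i) * γ) := by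
  have hp : (p : ℂ) ≠ 0 := NeZero.ne _
  rw [hatChi_eq_sum_stdAddChar, mul_pow, ← mul_assoc, ← mul_pow, mul_inv_cancel₀ hp, one_pow,
    one_mul, ← Fin.prod_const, prod_univ_sum]
  simp_rw [sum_mul, AddChar.map_sum_eq_prod]

lemma Tk_eq_card [DecidableEq (ZMod p)] (Q : Finset (ZMod p)) (k : ℕ) :
    Tk Q k = #{x ∈ (Fintype.piFinset fun _ : Fin k => Q) ×ˢ (Fintype.piFinset fun _ : Fin k => Q)
      | ∑ i, x.1 i = ∑ i, x.2 i} := by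
  rw [Tk, Nat.card_eq_fintype_card, Fintype.card_subtype]
  congr 1
  ext x
  simp only [mem_filter, mem_univ, true_and, mem_product, Fintype.mem_piFinset, and_assoc]

lemma sum_norm_hatChi_pow (Q : Finset (ZMod p)) (k : ℕ) :
    ∑ γ : ZMod p, ‖hatChi Q γ‖ ^ (2 * k) = p * Tk Q k / p ^ (2 * k) := by
  classical
  rw [eq_div_iff (pow_ne_zero _ (Nat.cast_ne_zero.2 (NeZero.ne p))), ← Complex.ofReal_inj]
  push_cast
  rw [Tk_eq_card, ← ZMod.sum_charSum_mul_conj_charSum, sum_mul]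
  refine sum_congr rfl fun γ _ => ?_
  rw [← pow_mul_hatChi_pow, Complex.mul_conj', norm_mul, norm_pow, norm_pow, Complex.norm_natCast]
  push_cast
  ring

end hatChi

theorem Tk_lower_general {p : ℕ} [Fact p.Prime] (A Q : Finset (ZMod p)) (hQA : Q ⊆ A)
    (K : ℝ) (hK : wienerNorm A ≤ K) (k : ℕ) (hk : 0 < k) :
    (Q.card : ℝ) ^ (2 * k) / ((A.card : ℝ) * K ^ (2 * k - 2)) ≤ (Tk Q k : ℝ) := by
  have hp : (0 : ℝ) < p := Nat.cast_pos.2 (NeZero.pos p)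
  have hW : 0 ≤ wienerNorm A := sum_nonneg fun γ _ => norm_nonneg (hatChi A γ)
  have hK₀ : 0 ≤ K := hW.trans hK
  have holder := pow_sum_mul_le_sum_pow_mul_sum_sq_mul_sum_pow univ (fun γ => ‖hatChi Q γ‖)
    (fun γ => ‖hatChi A γ‖) (fun _ => norm_nonneg _) (fun _ => norm_nonneg _) hk
  rw [sum_norm_hatChi_sq, sum_norm_hatChi_pow] at holder
  have key : ((#Q : ℝ) / p) ^ (2 * k) ≤ #A * K ^ (2 * k - 2) * Tk Q k / p ^ (2 * k) :=
    calc ((#Q : ℝ) / p) ^ (2 * k)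
        ≤ (∑ γ, ‖hatChi Q γ‖ * ‖hatChi A γ‖) ^ (2 * k) :=
          pow_le_pow_left₀ (by positivity) (card_div_le_sum_norm_hatChi_mul hQA) _
      _ ≤ wienerNorm A ^ (2 * k - 2) * (#A / p) * (p * Tk Q k / p ^ (2 * k)) := holder
      _ ≤ K ^ (2 * k - 2) * (#A / p) * (p * Tk Q k / p ^ (2 * k)) := by gcongr
      _ = #A * K ^ (2 * k - 2) * Tk Q k / p ^ (2 * k) := by field_simp
  rw [div_pow, div_le_div_iff_of_pos_right (by positivity)] at key
  exact div_le_of_le_mul₀ (by positivity) (Nat.cast_nonneg _) (by linarith)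

theorem Tk_lower {p : ℕ} [Fact p.Prime] (A Q : Finset (ZMod p)) (hQA : Q ⊆ A)
    (hA : A.Nonempty) (K : ℝ) (hK : wienerNorm A ≤ K) (k : ℕ) (hk : 0 < k) :
    (Q.card : ℝ) ^ (2 * k) / ((A.card : ℝ) * K ^ (2 * k - 2)) ≤ (Tk Q k : ℝ) :=
  Tk_lower_general A Q hQA K hK k hk
end

section
/- Let p be a prime and (c_x)_{|x|≤p/3} complex numbers indexed by integers x with |x| ≤ p/3. Then (1/p) Σ_{γ∈Z/pZ} |Σ_{|x|≤p/3} c_x e^{2πi xγ/p}| ≥ c₀ · ∫₀¹ |Σ_{|x|≤p/3} c_x e^{2πi x u}| du for an absolute constant c₀ > 0. -/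
/-!
With `D_N = ∑_{j<N} e_j` and `b = p - 2n`, the kernel `K = D_p · conj D_b · e_{-n}` has Fourier
coefficient exactly `b` at every frequency in `[-n, n]` and no frequency outside `(n - p, p - n)`.
For `f` of degree at most `n` no two frequencies of `f` and `K` differ by a nonzero multiple of `p`,
so sampling at the `p`-th roots of unity reproduces `f`: `∑_γ f(γ/p) K(u - γ/p) = p b f(u)`.
Taking norms and integrating in `u`, with `∫ |K| ≤ ∫ (|D_p|² + |D_b|²) / 2 = (p + b) / 2`, gives
`p b ∫ |f| ≤ (p - n) ∑_γ |f(γ/p)|`. For `n = ⌊p/3⌋` we have `p - n ≤ 2b`, hence `c₀ = 1/2`.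
-/

open Finset Complex ComplexConjugate

noncomputable def fourierExp (k : ℤ) (u : ℝ) : ℂ := exp (2 * Real.pi * I * k * u)

lemma fourierExp_add (j l : ℤ) (u : ℝ) :
    fourierExp (j + l) u = fourierExp j u * fourierExp l u := by
  simp only [fourierExp, ← exp_add]; push_cast; ring_nf

lemma fourierExp_sub (k : ℤ) (u s : ℝ) :
    fourierExp k (u - s) = fourierExp k u * fourierExp (-k) s := by
  simp only [fourierExp, ← exp_add]; push_cast; ring_nf

lemma conj_fourierExp (k : ℤ) (u : ℝ) : conj (fourierExp k u) = fourierExp (-k) u := by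
  simp only [fourierExp, ← exp_conj, map_mul, conj_I, conj_ofReal, map_ofNat, map_intCast]
  push_cast; ring_nf

lemma norm_fourierExp (k : ℤ) (u : ℝ) : ‖fourierExp k u‖ = 1 := by
  rw [fourierExp, norm_exp]; simp

lemma continuous_fourierExp (k : ℤ) : Continuous (fourierExp k) := by
  unfold fourierExp; fun_prop

lemma fourierExp_intCast (k m : ℤ) : fourierExp k m = 1 := by
  rw [fourierExp, ← exp_int_mul_two_pi_mul_I (k * m)]; push_cast; ring_nf

lemma periodic_fourierExp (k : ℤ) : Function.Periodic (fourierExp k) 1 := by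
  intro u
  rw [← sub_neg_eq_add, fourierExp_sub, ← Int.cast_one, ← Int.cast_neg, fourierExp_intCast, mul_one]

lemma integral_fourierExp (k : ℤ) :
    ∫ u in (0 : ℝ)..1, fourierExp k u = if k = 0 then 1 else 0 := by
  split_ifs with hk
  · simp [fourierExp, hk]
  · have hc : 2 * Real.pi * I * k ≠ 0 := by simp [Real.pi_ne_zero, I_ne_zero, hk]
    simp only [fourierExp, integral_exp_mul_complex hc]
    rw [ofReal_one, mul_one, ofReal_zero, mul_zero, exp_zero, mul_comm _ (k : ℂ),
      exp_int_mul_two_pi_mul_I, sub_self, zero_div]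

lemma sum_fourierExp_div {p : ℕ} (hp : p ≠ 0) (k : ℤ) :
    ∑ γ ∈ range p, fourierExp k (γ / p) = if (p : ℤ) ∣ k then (p : ℂ) else 0 := by
  have hζ := isPrimitiveRoot_exp p hp
  have hpow : ∀ γ : ℕ, fourierExp k (γ / p) = (exp (2 * Real.pi * I / p) ^ k) ^ γ := by
    intro γ
    rw [← zpow_natCast, ← zpow_mul, ← exp_int_mul]
    simp only [fourierExp]; push_cast; ring_nf
  simp only [hpow]
  split_ifs with hdvd
  · simp [(hζ.zpow_eq_one_iff_dvd k).mpr hdvd]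
  · rw [geom_sum_eq ((hζ.zpow_eq_one_iff_dvd k).not.mpr hdvd), ← zpow_natCast, ← zpow_mul,
      mul_comm k, zpow_mul, zpow_natCast, hζ.pow_eq_one, one_zpow, sub_self, zero_div]

noncomputable def trigPoly (S : Finset ℤ) (c : ℤ → ℂ) (u : ℝ) : ℂ :=
  ∑ x ∈ S, c x * fourierExp x u

lemma continuous_trigPoly (S : Finset ℤ) (c : ℤ → ℂ) : Continuous (trigPoly S c) :=
  continuous_finsetSum _ fun x _ => continuous_const.mul (continuous_fourierExp x)

lemma sum_trigPoly_mul_sum_fourierExp {ι : Type*} {p : ℕ} (hp : p ≠ 0) (S : Finset ℤ)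
    (c : ℤ → ℂ) (T : Finset ι) (φ : ι → ℤ) (hsep : ∀ x ∈ S, ∀ i ∈ T, (p : ℤ) ∣ x - φ i → x = φ i)
    (u : ℝ) :
    ∑ γ ∈ range p, trigPoly S c (γ / p) * ∑ i ∈ T, fourierExp (φ i) (u - γ / p) =
      p * ∑ x ∈ S, #{i ∈ T | φ i = x} * c x * fourierExp x u := by
  have horth : ∀ x ∈ S, ∀ i ∈ T, ∑ γ ∈ range p, fourierExp (x - φ i) (γ / p) =
      if φ i = x then (p : ℂ) else 0 := fun x hx i hi => by
    rw [sum_fourierExp_div hp]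
    by_cases h : φ i = x
    · simp [h]
    · rw [if_neg h, if_neg (fun hdvd => h (hsep x hx i hi hdvd).symm)]
  calc ∑ γ ∈ range p, trigPoly S c (γ / p) * ∑ i ∈ T, fourierExp (φ i) (u - γ / p)
      = ∑ x ∈ S, ∑ i ∈ T, c x * fourierExp (φ i) u *
          ∑ γ ∈ range p, fourierExp (x - φ i) (γ / p) := by
        simp only [trigPoly, sum_mul, mul_sum]
        rw [sum_comm]
        refine (sum_congr rfl fun i _ => sum_comm).trans (sum_comm.trans ?_)
        refine sum_congr rfl fun x _ => sum_congr rfl fun i _ => sum_congr rfl fun γ _ => ?_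
        rw [fourierExp_sub, sub_eq_add_neg, fourierExp_add]
        ring
    _ = ∑ x ∈ S, ∑ i ∈ T with φ i = x, p * (c x * fourierExp x u) := by
        refine sum_congr rfl fun x hx => ?_
        rw [sum_filter]
        refine sum_congr rfl fun i hi => ?_
        rw [horth x hx i hi]
        split_ifs with h
        · rw [h]; ring
        · ring
    _ = p * ∑ x ∈ S, #{i ∈ T | φ i = x} * c x * fourierExp x u := by
        simp only [sum_const, nsmul_eq_mul, mul_sum]
        refine sum_congr rfl fun x _ => ?_
        ring

noncomputable def dirichletSum (N : ℕ) (t : ℝ) : ℂ := ∑ j ∈ range N, fourierExp j t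

lemma continuous_dirichletSum (N : ℕ) : Continuous (dirichletSum N) :=
  continuous_finsetSum _ fun j _ => continuous_fourierExp j

lemma periodic_dirichletSum (N : ℕ) : Function.Periodic (dirichletSum N) 1 := fun t =>
  sum_congr rfl fun j _ => periodic_fourierExp j t

lemma normSq_dirichletSum (N : ℕ) (t : ℝ) :
    (normSq (dirichletSum N t) : ℂ) = ∑ j ∈ range N, ∑ l ∈ range N, fourierExp (j - l) t := by
  rw [← mul_conj, dirichletSum, map_sum, sum_mul_sum]
  refine sum_congr rfl fun j _ => sum_congr rfl fun l _ => ?_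
  rw [conj_fourierExp, sub_eq_add_neg, fourierExp_add]

lemma integral_normSq_dirichletSum (N : ℕ) :
    ∫ t in (0 : ℝ)..1, normSq (dirichletSum N t) = N := by
  apply ofReal_injective
  rw [← intervalIntegral.integral_ofReal]
  simp only [normSq_dirichletSum]
  rw [intervalIntegral.integral_finsetSum fun j _ => ?_]
  · simp only [intervalIntegral.integral_finsetSum fun l _ =>
      (continuous_fourierExp _).intervalIntegrable 0 1, integral_fourierExp, sub_eq_zero,
      Nat.cast_inj, sum_ite_eq, mem_range]
    simp [filter_true_of_mem fun j hj => mem_range.mp hj]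
  · exact (continuous_finsetSum _ fun l _ => continuous_fourierExp _).intervalIntegrable 0 1

lemma integral_normSq_dirichletSum_sub (N : ℕ) (s : ℝ) :
    ∫ t in (0 : ℝ)..1, normSq (dirichletSum N (t - s)) = N := by
  have hper : Function.Periodic (fun t => normSq (dirichletSum N t)) 1 := fun t => by
    simp only [periodic_dirichletSum N t]
  rw [intervalIntegral.integral_comp_sub_right (fun t => normSq (dirichletSum N t)),
    zero_sub, sub_eq_neg_add, hper.intervalIntegral_add_eq (-s) 0, zero_add,
    integral_normSq_dirichletSum]

noncomputable def dirichletProduct (a b n : ℕ) (t : ℝ) : ℂ :=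
  dirichletSum a t * conj (dirichletSum b t) * fourierExp (-n) t

lemma dirichletProduct_eq_sum (a b n : ℕ) (t : ℝ) :
    dirichletProduct a b n t =
      ∑ i ∈ range a ×ˢ range b, fourierExp ((i.1 : ℤ) - i.2 - n) t := by
  rw [dirichletProduct, dirichletSum, dirichletSum, map_sum, sum_mul_sum, sum_product, sum_mul]
  refine sum_congr rfl fun j _ => ?_
  rw [sum_mul]
  refine sum_congr rfl fun l _ => ?_
  rw [conj_fourierExp, sub_eq_add_neg, sub_eq_add_neg, fourierExp_add, fourierExp_add]

lemma continuous_dirichletProduct (a b n : ℕ) : Continuous (dirichletProduct a b n) :=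
  ((continuous_dirichletSum a).mul (continuous_conj.comp (continuous_dirichletSum b))).mul
    (continuous_fourierExp _)

lemma norm_dirichletProduct_le (a b n : ℕ) (t : ℝ) :
    ‖dirichletProduct a b n t‖ ≤ (normSq (dirichletSum a t) + normSq (dirichletSum b t)) / 2 := by
  rw [dirichletProduct, norm_mul, norm_mul, norm_conj, norm_fourierExp, mul_one,
    normSq_eq_norm_sq, normSq_eq_norm_sq]
  nlinarith [sq_nonneg (‖dirichletSum a t‖ - ‖dirichletSum b t‖)]

lemma integral_norm_dirichletProduct_sub_le (a b n : ℕ) (s : ℝ) :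
    ∫ t in (0 : ℝ)..1, ‖dirichletProduct a b n (t - s)‖ ≤ (a + b) / 2 := by
  have hcont : ∀ N, Continuous fun t => normSq (dirichletSum N (t - s)) := fun N =>
    continuous_normSq.comp ((continuous_dirichletSum N).comp (continuous_sub_right s))
  have hK : Continuous fun t => ‖dirichletProduct a b n (t - s)‖ :=
    ((continuous_dirichletProduct a b n).comp (continuous_sub_right s)).norm
  calc ∫ t in (0 : ℝ)..1, ‖dirichletProduct a b n (t - s)‖
      ≤ ∫ t in (0 : ℝ)..1,
          (normSq (dirichletSum a (t - s)) + normSq (dirichletSum b (t - s))) / 2 :=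
        intervalIntegral.integral_mono_on zero_le_one (hK.intervalIntegrable 0 1)
          ((((hcont a).add (hcont b)).div_const 2).intervalIntegrable 0 1)
          fun t _ => norm_dirichletProduct_le a b n (t - s)
    _ = (a + b) / 2 := by
        rw [intervalIntegral.integral_div, intervalIntegral.integral_add
          ((hcont a).intervalIntegrable 0 1) ((hcont b).intervalIntegrable 0 1),
          integral_normSq_dirichletSum_sub, integral_normSq_dirichletSum_sub]

lemma card_filter_sub_sub_eq (b n : ℕ) {x : ℤ} (hx : |x| ≤ n) :
    #{i ∈ range (b + 2 * n) ×ˢ range b | (i.1 : ℤ) - i.2 - n = x} = b := by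
  rw [abs_le] at hx
  refine .trans ?_ (card_range b)
  refine card_nbij' (fun i => i.2) (fun l => ((l + n + x).toNat, l)) ?_ ?_ ?_ ?_
  all_goals
    intro i hi
    simp only [coe_filter, coe_range, mem_product, mem_range, Set.mem_ofPred_eq,
      Set.mem_Iio] at hi ⊢
  · exact hi.1.2
  · omega
  · exact Prod.ext (by dsimp only; omega) rfl

theorem mul_integral_norm_trigPoly_le {p n : ℕ} (h : 2 * n < p) (c : ℤ → ℂ) :
    (p * (p - 2 * n) : ℝ) * ∫ u in (0 : ℝ)..1, ‖trigPoly (Icc (-n) n) c u‖ ≤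
      (p - n) * ∑ γ ∈ range p, ‖trigPoly (Icc (-n) n) c (γ / p)‖ := by
  obtain ⟨b, rfl⟩ : ∃ b, p = b + 2 * n := ⟨p - 2 * n, by omega⟩
  set p := b + 2 * n with hp
  set f := trigPoly (Icc (-(n : ℤ)) n) c
  set K := dirichletProduct p b n
  have hsampling : ∀ u : ℝ, ∑ γ ∈ range p, f (γ / p) * K (u - γ / p) = p * b * f u := by
    intro u
    simp only [K, dirichletProduct_eq_sum]
    rw [sum_trigPoly_mul_sum_fourierExp (by omega)]
    · simp only [f, trigPoly, mul_sum]
      refine sum_congr rfl fun x hx => ?_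
      rw [card_filter_sub_sub_eq b n (abs_le.mpr (mem_Icc.mp hx))]
      ring
    · rintro x hx ⟨j, l⟩ hi hdvd
      simp only [mem_Icc, mem_product, mem_range] at hx hi
      exact eq_of_sub_eq_zero (Int.eq_zero_of_abs_lt_dvd hdvd (abs_lt.mpr ⟨by omega, by omega⟩))
  have hpointwise : ∀ u : ℝ,
      p * b * ‖f u‖ ≤ ∑ γ ∈ range p, ‖f (γ / p)‖ * ‖K (u - γ / p)‖ := by
    intro u
    calc (p * b * ‖f u‖ : ℝ) = ‖∑ γ ∈ range p, f (γ / p) * K (u - γ / p)‖ := by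
          rw [hsampling, norm_mul, norm_mul, Complex.norm_natCast, Complex.norm_natCast]
      _ ≤ ∑ γ ∈ range p, ‖f (γ / p)‖ * ‖K (u - γ / p)‖ :=
          (norm_sum_le _ _).trans_eq (sum_congr rfl fun γ _ => norm_mul _ _)
  have hK : ∀ s : ℝ, Continuous fun u => ‖K (u - s)‖ := fun s =>
    ((continuous_dirichletProduct p b n).comp (continuous_sub_right s)).norm
  calc (p * (p - 2 * n) : ℝ) * ∫ u in (0 : ℝ)..1, ‖f u‖
      = ∫ u in (0 : ℝ)..1, p * b * ‖f u‖ := by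
        rw [intervalIntegral.integral_const_mul, hp]; push_cast; ring
    _ ≤ ∫ u in (0 : ℝ)..1, ∑ γ ∈ range p, ‖f (γ / p)‖ * ‖K (u - γ / p)‖ :=
        intervalIntegral.integral_mono_on zero_le_one
          ((continuous_const.mul (continuous_trigPoly _ c).norm).intervalIntegrable 0 1)
          ((continuous_finsetSum _ fun γ _ => continuous_const.mul (hK _)).intervalIntegrable 0 1)
          fun u _ => hpointwise u
    _ = ∑ γ ∈ range p, ‖f (γ / p)‖ * ∫ u in (0 : ℝ)..1, ‖K (u - γ / p)‖ := by
        rw [intervalIntegral.integral_finsetSum fun γ _ => ?_]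
        · simp only [intervalIntegral.integral_const_mul]
        · exact (continuous_const.mul (hK _)).intervalIntegrable 0 1
    _ ≤ ∑ γ ∈ range p, ‖f (γ / p)‖ * ((p + b) / 2) :=
        sum_le_sum fun γ _ => mul_le_mul_of_nonneg_left
          (integral_norm_dirichletProduct_sub_le p b n _) (norm_nonneg _)
    _ = (p - n) * ∑ γ ∈ range p, ‖f (γ / p)‖ := by
        rw [← sum_mul, hp]; push_cast; ring

theorem discrete_vs_continuous_L1 :
    ∃ c₀ : ℝ, 0 < c₀ ∧ ∀ (p : ℕ), p.Prime → ∀ (c : ℤ → ℂ),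
      c₀ * ∫ u in (0:ℝ)..1,
          ‖∑ x ∈ Finset.Icc (-((p : ℤ) / 3)) ((p : ℤ) / 3),
            c x * Complex.exp (2 * Real.pi * Complex.I * x * u)‖ ≤
      (1 / p : ℝ) * ∑ γ ∈ Finset.range p,
          ‖∑ x ∈ Finset.Icc (-((p : ℤ) / 3)) ((p : ℤ) / 3),
            c x * Complex.exp (2 * Real.pi * Complex.I * x * γ / p)‖ := by
  refine ⟨1 / 2, by norm_num, fun p hp c => ?_⟩
  have hp0 : (0 : ℝ) < p := by exact_mod_cast hp.pos
  have hn : (p : ℤ) / 3 = ((p / 3 : ℕ) : ℤ) := by omega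
  rw [hn]
  set n := p / 3
  set A := ∫ u in (0 : ℝ)..1, ‖trigPoly (Icc (-n) n) c u‖
  set B := ∑ γ ∈ range p, ‖trigPoly (Icc (-n) n) c (γ / p)‖
  have hB_eq : B = ∑ γ ∈ range p,
      ‖∑ x ∈ Icc (-(n : ℤ)) n, c x * exp (2 * Real.pi * I * x * γ / p)‖ :=
    sum_congr rfl fun γ _ => congrArg norm <| sum_congr rfl fun x _ => by
      rw [fourierExp]; push_cast; ring_nf
  rw [← hB_eq]
  have hbound : (p * (p - 2 * n) : ℝ) * A ≤ (p - n) * B :=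
    mul_integral_norm_trigPoly_le (by have := hp.pos; omega) c
  have h3n : (3 * n : ℝ) ≤ p := by exact_mod_cast Nat.mul_div_le p 3
  have hB : 0 ≤ B := sum_nonneg fun γ _ => norm_nonneg _
  have hscaled : (p - 2 * n : ℝ) * (p * A) ≤ (p - 2 * n) * (2 * B) := by nlinarith
  have hpA : p * A ≤ 2 * B := le_of_mul_le_mul_left hscaled (by linarith)
  change 1 / 2 * A ≤ 1 / p * B
  rw [div_mul_eq_mul_div, div_mul_eq_mul_div, div_le_div_iff₀ two_pos hp0]
  linarith
end

section
/- Let p be prime, n ≤ p/4 a positive integer, and (c_x)_{x∈Z/pZ} complex numbers. Then Σ_{γ∈Z/pZ} |Σ_{|x|≤n} c_x e^{2πi xγ/p} + Σ_{n<|x|≤2n} ((2n−|x|+1)/(n+1)) c_x e^{2πi xγ/p}| ≤ 3 Σ_{γ∈Z/pZ} |Σ_{|x|≤p/2} c_x e^{2πi xγ/p}|. -/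
/-!
With `e(t) = exp(2πit/p)` (Mathlib's `ZMod.stdAddChar`) and `f(γ) = ∑ₓ c_x e(xγ)`, the
de la Vallée Poussin mean is `((n+1)p)⁻¹` times the convolution of `f` with `V = K_{2n+1} - K_n`,
where `K_m(γ) = ∑_{|x|<m} (m - |x|) e(xγ) = |∑_{0≤j<m} e(jγ)|²` is the unnormalised Fejér kernel.
As `K_m ≥ 0` and its sum over `γ` is `p` times its constant coefficient, `∑_γ |K_m(γ)| = mp` for
`m ≤ p`. Hence `∑_γ |V(γ)| ≤ (3n+1)p`, and Young's inequality bounds the mean by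
`(3n+1)/(n+1) ≤ 3` times `∑_γ |f(γ)|`.
-/

open Finset ZMod

theorem card_filter_Ico_prod_sub_eq (m : ℕ) (x : ℤ) :
    #{q ∈ Ico (0 : ℤ) m ×ˢ Ico (0 : ℤ) m | q.1 - q.2 = x} = m - x.natAbs := by
  have hset : {q ∈ Ico (0 : ℤ) m ×ˢ Ico (0 : ℤ) m | q.1 - q.2 = x}
      = (Ico (max 0 (-x)) (min m (m - x))).image fun k => (k + x, k) := by
    ext ⟨j, k⟩
    simp only [mem_filter, mem_product, mem_Ico, mem_image, Prod.mk.injEq]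
    constructor
    · rintro ⟨⟨⟨hj0, hjm⟩, hk0, hkm⟩, rfl⟩
      exact ⟨k, ⟨by omega, by omega⟩, by omega, rfl⟩
    · rintro ⟨k, ⟨hk0, hkm⟩, rfl, rfl⟩
      exact ⟨⟨⟨by omega, by omega⟩, by omega, by omega⟩, by omega⟩
  rw [hset, card_image_of_injective _ fun a b h => congrArg Prod.snd h, Int.card_Ico]
  omega

theorem sum_Ico_sum_Ico_sub_eq {M : Type*} [AddCommMonoid M] (m : ℕ) (g : ℤ → M) :
    ∑ j ∈ Ico (0 : ℤ) m, ∑ k ∈ Ico (0 : ℤ) m, g (j - k)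
      = ∑ x ∈ Ioo (-(m : ℤ)) m, (m - x.natAbs) • g x := by
  rw [← sum_product',
    ← sum_fiberwise_of_maps_to (g := fun q => q.1 - q.2) (t := Ioo (-(m : ℤ)) m)]
  · refine sum_congr rfl fun x _ => ?_
    rw [sum_congr rfl fun q hq => congrArg g (mem_filter.1 hq).2, sum_const,
      card_filter_Ico_prod_sub_eq]
  · intro q hq
    simp only [mem_product, mem_Ico] at hq
    simp only [mem_Ioo]
    omega

theorem sum_norm_sum_mul_sub_le {G : Type*} [AddCommGroup G] [Fintype G] {R : Type*}
    [SeminormedRing R] (f k : G → R) :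
    ∑ γ, ‖∑ δ, f δ * k (γ - δ)‖ ≤ (∑ δ, ‖f δ‖) * ∑ γ, ‖k γ‖ :=
  calc ∑ γ, ‖∑ δ, f δ * k (γ - δ)‖
      ≤ ∑ γ, ∑ δ, ‖f δ‖ * ‖k (γ - δ)‖ :=
        sum_le_sum fun γ _ => (norm_sum_le _ _).trans (sum_le_sum fun δ _ => norm_mul_le _ _)
    _ = ∑ δ, ‖f δ‖ * ∑ γ, ‖k (γ - δ)‖ := by rw [sum_comm]; simp only [mul_sum]
    _ = (∑ δ, ‖f δ‖) * ∑ γ, ‖k γ‖ := by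
        simp only [sum_mul,
          Fintype.sum_equiv (Equiv.subRight _) (fun γ => ‖k (γ - _)‖) (‖k ·‖) fun _ => rfl]

section

variable {p : ℕ} [NeZero p]

theorem exp_eq_stdAddChar (x : ℤ) (γ : ZMod p) :
    Complex.exp (2 * Real.pi * Complex.I * x * (γ.val : ℂ) / p)
      = stdAddChar ((x : ZMod p) * γ) := by
  have hγ : (x : ZMod p) * γ = ((x * γ.val : ℤ) : ZMod p) := by
    push_cast
    rw [natCast_zmod_val]
  rw [hγ, stdAddChar_coe]
  push_cast
  ring_nf

theorem sum_mul_stdAddChar_sub (c : ZMod p → ℂ) (x γ : ZMod p) :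
    ∑ δ, (∑ y, c y * stdAddChar (y * δ)) * stdAddChar (x * (γ - δ))
      = p * (c x * stdAddChar (x * γ)) := by
  have hsplit (y δ : ZMod p) : stdAddChar (y * δ) * stdAddChar (x * (γ - δ))
      = stdAddChar (x * γ) * stdAddChar (δ * (y - x)) := by
    rw [← AddChar.map_add_eq_mul, ← AddChar.map_add_eq_mul]
    ring_nf
  simp_rw [sum_mul, mul_assoc, hsplit]
  rw [sum_comm]
  simp_rw [← mul_sum, AddChar.sum_mulShift _ (isPrimitive_stdAddChar p), sub_eq_zero,
    Nat.cast_ite, Nat.cast_zero, mul_ite, mul_zero, sum_ite_eq', if_pos (mem_univ _), ZMod.card]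
  ring

theorem sum_mul_sum_stdAddChar_sub (c : ZMod p → ℂ) (s : Finset ℤ) (w : ℤ → ℂ) (γ : ZMod p) :
    ∑ δ, (∑ y, c y * stdAddChar (y * δ)) * ∑ x ∈ s, w x * stdAddChar ((x : ZMod p) * (γ - δ))
      = p * ∑ x ∈ s, w x * (c x * stdAddChar ((x : ZMod p) * γ)) := by
  simp_rw [mul_sum]
  rw [sum_comm]
  refine sum_congr rfl fun x _ => ?_
  rw [mul_left_comm, ← sum_mul_stdAddChar_sub, mul_sum]
  simp_rw [mul_left_comm (w x)]

noncomputable def fejerKernel (p m : ℕ) [NeZero p] (γ : ZMod p) : ℂ :=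
  ∑ x ∈ Ioo (-(m : ℤ)) m, ((m - x.natAbs : ℕ) : ℂ) * stdAddChar ((x : ZMod p) * γ)

theorem fejerKernel_eq_norm_sq (m : ℕ) (γ : ZMod p) :
    fejerKernel p m γ
      = ((‖∑ j ∈ Ico (0 : ℤ) m, stdAddChar ((j : ZMod p) * γ)‖ ^ 2 : ℝ) : ℂ) := by
  rw [← Complex.normSq_eq_norm_sq, ← Complex.mul_conj, map_sum, sum_mul_sum]
  simp_rw [← AddChar.map_neg_eq_conj, ← AddChar.map_add_eq_mul, ← neg_mul, ← add_mul,
    ← Int.cast_neg, ← Int.cast_add, ← sub_eq_add_neg]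
  rw [sum_Ico_sum_Ico_sub_eq m fun x => stdAddChar ((x : ZMod p) * γ), fejerKernel]
  simp_rw [nsmul_eq_mul]

theorem fejerKernel_eq_sum_of_subset {m : ℕ} {s : Finset ℤ} (hs : Ioo (-(m : ℤ)) m ⊆ s)
    (γ : ZMod p) :
    fejerKernel p m γ
      = ∑ x ∈ s, ((m - x.natAbs : ℕ) : ℂ) * stdAddChar ((x : ZMod p) * γ) := by
  refine sum_subset hs fun x _ hx => ?_
  rw [mem_Ioo] at hx
  rw [show m - x.natAbs = 0 by omega, Nat.cast_zero, zero_mul]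

theorem sum_fejerKernel {m : ℕ} (hm : m ≤ p) : ∑ γ, fejerKernel p m γ = m * p := by
  simp_rw [fejerKernel, mul_comm (_ : ZMod p) _]
  rw [sum_comm]
  simp_rw [← mul_sum, AddChar.sum_mulShift _ (isPrimitive_stdAddChar p), ZMod.card]
  rw [sum_eq_single 0]
  · simp
  · intro x hx hx0
    rw [mem_Ioo] at hx
    have hx' : (x : ZMod p) ≠ 0 := by
      rw [Ne, intCast_zmod_eq_zero_iff_dvd]
      exact fun h => hx0 (Int.eq_zero_of_abs_lt_dvd h (abs_lt.2 ⟨by omega, by omega⟩))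
    rw [if_neg hx', Nat.cast_zero, mul_zero]
  · intro h
    rw [show m = 0 by simp only [mem_Ioo] at h; omega]
    simp

theorem sum_norm_fejerKernel {m : ℕ} (hm : m ≤ p) :
    ∑ γ, ‖fejerKernel p m γ‖ = m * p := by
  have hnorm (γ : ZMod p) : ((‖fejerKernel p m γ‖ : ℝ) : ℂ) = fejerKernel p m γ := by
    rw [fejerKernel_eq_norm_sq, Complex.norm_real, Real.norm_of_nonneg (sq_nonneg _)]
  have hsum : ((∑ γ, ‖fejerKernel p m γ‖ : ℝ) : ℂ) = m * p := by
    rw [Complex.ofReal_sum, sum_congr rfl fun γ _ => hnorm γ, sum_fejerKernel hm]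
  exact_mod_cast hsum

noncomputable def vallePoussinKernel (p n : ℕ) [NeZero p] (γ : ZMod p) : ℂ :=
  fejerKernel p (2 * n + 1) γ - fejerKernel p n γ

theorem vallePoussinKernel_eq (n : ℕ) (γ : ZMod p) :
    vallePoussinKernel p n γ = ∑ x ∈ Icc (-(2 * n : ℤ)) (2 * n),
      ((min (n + 1) (2 * n + 1 - x.natAbs) : ℕ) : ℂ) * stdAddChar ((x : ZMod p) * γ) := by
  have hsub {m : ℕ} (hm : m ≤ 2 * n + 1) :
      Ioo (-(m : ℤ)) m ⊆ Icc (-(2 * n : ℤ)) (2 * n) :=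
    fun x hx => by simp only [mem_Ioo, mem_Icc] at hx ⊢; omega
  rw [vallePoussinKernel, fejerKernel_eq_sum_of_subset (hsub le_rfl),
    fejerKernel_eq_sum_of_subset (hsub (by omega)), ← sum_sub_distrib]
  refine sum_congr rfl fun x _ => ?_
  have hweight : 2 * n + 1 - x.natAbs = min (n + 1) (2 * n + 1 - x.natAbs) + (n - x.natAbs) := by
    omega
  rw [← sub_mul, sub_eq_iff_eq_add.2]
  exact_mod_cast hweight

theorem sum_norm_vallePoussinKernel_le {n : ℕ} (hn : 2 * n + 1 ≤ p) :
    ∑ γ, ‖vallePoussinKernel p n γ‖ ≤ (3 * n + 1) * p :=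
  calc ∑ γ, ‖vallePoussinKernel p n γ‖
      ≤ ∑ γ, (‖fejerKernel p (2 * n + 1) γ‖ + ‖fejerKernel p n γ‖) :=
        sum_le_sum fun γ _ => norm_sub_le _ _
    _ = (3 * n + 1) * p := by
        rw [sum_add_distrib, sum_norm_fejerKernel hn, sum_norm_fejerKernel (by omega)]
        push_cast
        ring

theorem vallePoussin_weights_sum (n : ℕ) (a : ℤ → ℂ) :
    (∑ x ∈ Icc (-(n : ℤ)) n, a x)
        + ∑ x ∈ Icc (-(2 * n : ℤ)) (2 * n) \ Icc (-(n : ℤ)) n,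
          ((2 * n - |x| + 1 : ℤ) : ℂ) / ((n : ℂ) + 1) * a x
      = ((n : ℂ) + 1)⁻¹ * ∑ x ∈ Icc (-(2 * n : ℤ)) (2 * n),
          ((min (n + 1) (2 * n + 1 - x.natAbs) : ℕ) : ℂ) * a x := by
  have hsub : Icc (-(n : ℤ)) n ⊆ Icc (-(2 * n : ℤ)) (2 * n) :=
    fun x hx => by simp only [mem_Icc] at hx ⊢; omega
  have hn : (n : ℂ) + 1 ≠ 0 := Nat.cast_add_one_ne_zero n
  rw [← sum_sdiff hsub, mul_add, add_comm, mul_sum, mul_sum]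
  congr 1
  · refine sum_congr rfl fun x hx => ?_
    simp only [mem_sdiff, mem_Icc] at hx
    rw [show min (n + 1) (2 * n + 1 - x.natAbs) = 2 * n - x.natAbs + 1 by omega]
    push_cast [Nat.cast_sub (show x.natAbs ≤ 2 * n by omega), Nat.cast_natAbs]
    ring
  · refine sum_congr rfl fun x hx => ?_
    simp only [mem_Icc] at hx
    rw [show min (n + 1) (2 * n + 1 - x.natAbs) = n + 1 by omega]
    field_simp
    push_cast
    ring

theorem vallePoussin_mean_eq_sum_mul_vallePoussinKernel (n : ℕ) (c : ZMod p → ℂ)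
    (γ : ZMod p) :
    (∑ x ∈ Icc (-(n : ℤ)) n, c x * stdAddChar ((x : ZMod p) * γ))
        + ∑ x ∈ Icc (-(2 * n : ℤ)) (2 * n) \ Icc (-(n : ℤ)) n,
          ((2 * n - |x| + 1 : ℤ) : ℂ) / ((n : ℂ) + 1) * (c x * stdAddChar ((x : ZMod p) * γ))
      = (((n : ℂ) + 1) * p)⁻¹ *
          ∑ δ, (∑ y, c y * stdAddChar (y * δ)) * vallePoussinKernel p n (γ - δ) := by
  simp_rw [vallePoussin_weights_sum n fun x => c x * stdAddChar ((x : ZMod p) * γ),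
    vallePoussinKernel_eq, sum_mul_sum_stdAddChar_sub, mul_inv, mul_assoc,
    inv_mul_cancel_left₀ (Nat.cast_ne_zero.2 (NeZero.ne p) : (p : ℂ) ≠ 0)]

end

theorem vallePoussin_mean_bound_general {p : ℕ} [Fact p.Prime] (n : ℕ)
    (hnp : 4 * n ≤ p) (c : ZMod p → ℂ) :
    ∑ γ : ZMod p,
      ‖(∑ x ∈ Finset.Icc (-(n : ℤ)) n,
            c (x : ZMod p) * Complex.exp (2 * Real.pi * Complex.I * x * (γ.val : ℂ) / p)) +
         ∑ x ∈ Finset.Icc (-(2 * n : ℤ)) (2 * n) \ Finset.Icc (-(n : ℤ)) n,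
            (((2 * n - |x| + 1 : ℤ) : ℂ) / ((n : ℂ) + 1)) *
              c (x : ZMod p) * Complex.exp (2 * Real.pi * Complex.I * x * (γ.val : ℂ) / p)‖ ≤
    3 * ∑ γ : ZMod p,
      ‖∑ x : ZMod p,
        c x * Complex.exp (2 * Real.pi * Complex.I * (x.valMinAbs : ℂ) * (γ.val : ℂ) / p)‖ := by
  have hp : p.Prime := Fact.out
  have hn : 2 * n + 1 ≤ p := by have := hp.two_le; omega
  simp only [exp_eq_stdAddChar, coe_valMinAbs]
  simp only [mul_assoc, vallePoussin_mean_eq_sum_mul_vallePoussinKernel, norm_mul, ← mul_sum]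
  set F := ∑ γ : ZMod p, ‖∑ y, c y * stdAddChar (y * γ)‖
  have hF : 0 ≤ F := sum_nonneg fun γ _ => norm_nonneg _
  have hnorm : ‖(((n : ℂ) + 1) * p)⁻¹‖ = ((n + 1 : ℝ) * p)⁻¹ := by
    rw [← Nat.cast_succ, ← Nat.cast_mul, norm_inv, Complex.norm_natCast]
    push_cast
    ring
  calc _ ≤ ((n + 1 : ℝ) * p)⁻¹ * (F * ((3 * n + 1) * p)) := by
        rw [hnorm]
        gcongr
        exact (sum_norm_sum_mul_sub_le _ _).trans
          (mul_le_mul_of_nonneg_left (sum_norm_vallePoussinKernel_le hn) hF)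
    _ ≤ 3 * F := by
        have : (0 : ℝ) < p := by exact_mod_cast hp.pos
        rw [inv_mul_le_iff₀ (by positivity)]
        nlinarith [mul_nonneg hF this.le]

theorem vallePoussin_mean_bound {p : ℕ} [Fact p.Prime] (n : ℕ) (hn : 0 < n)
    (hnp : 4 * n ≤ p) (c : ZMod p → ℂ) :
    ∑ γ : ZMod p,
      ‖(∑ x ∈ Finset.Icc (-(n : ℤ)) n,
            c (x : ZMod p) * Complex.exp (2 * Real.pi * Complex.I * x * (γ.val : ℂ) / p)) +
         ∑ x ∈ Finset.Icc (-(2 * n : ℤ)) (2 * n) \ Finset.Icc (-(n : ℤ)) n,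
            (((2 * n - |x| + 1 : ℤ) : ℂ) / ((n : ℂ) + 1)) *
              c (x : ZMod p) * Complex.exp (2 * Real.pi * Complex.I * x * (γ.val : ℂ) / p)‖ ≤
    3 * ∑ γ : ZMod p,
      ‖∑ x : ZMod p,
        c x * Complex.exp (2 * Real.pi * Complex.I * (x.valMinAbs : ℂ) * (γ.val : ℂ) / p)‖ :=
  vallePoussin_mean_bound_general n hnp c
end

section
/- Under the hypotheses of the dyadically scattered set lemma restricted to nonnegative elements: let Q ⊆ ℤ_{≥0} be a disjoint union of M-element sets Q_i ⊆ (4^i m/2, 4^i m] over I indices i from ℕ, and for x ∈ ℤ let N_k(x) be the number of k-tuples (q_1,…,q_k) ∈ Q^k with q_1+⋯+q_k = x. Then N_k(x) ≤ 2^{6k} k^k M^{k−1} for every x. -/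
/-!
Let `N(r, c, y)` count the `r`-tuples with entries in `⋃_{i ≤ c} Q_i` summing to `y`. Removing an
entry of largest scale `i` gives `N(r+1, c, y) ≤ (r+1) ∑_{i ≤ c} ∑_{q ∈ Q_i} N(r, i, y - q)`, and
induction on `r` yields `N(r, c, y) ≤ M^(r-1) r! 4^r 2^(-y / (4^c m))`. Removing `q ≤ 4^i m` costs
the weight at most a factor `2`; only scales with `4^i m < 2y` contribute, and the weights
`2^(-y / (4^i m))` of those scales decay geometrically below the largest one, so they sum to at
most twice the weight at scale `c`. For `y > 0` the weight is at most `1`, and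
`k! 4^k ≤ 2^(6k) k^k`.
-/

open Finset
open scoped Nat

/-- `Nk Q k x`: the number of `k`-tuples from `Q` summing to `x`. -/
noncomputable def Nk (Q : Finset ℤ) (k : ℕ) (x : ℤ) : ℕ :=
  Nat.card {f : Fin k → ℤ // (∀ i, f i ∈ Q) ∧ ∑ i, f i = x}

def sumTuples (Q : Finset ℤ) (r : ℕ) (y : ℤ) : Finset (Fin r → ℤ) :=
  (Fintype.piFinset fun _ => Q).filter fun f => ∑ j, f j = y

section sumTuples

variable {Q : Finset ℤ} {r : ℕ} {y : ℤ}

@[simp]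
lemma mem_sumTuples {f : Fin r → ℤ} : f ∈ sumTuples Q r y ↔ (∀ j, f j ∈ Q) ∧ ∑ j, f j = y := by
  simp [sumTuples]

lemma Nk_eq_card_sumTuples (Q : Finset ℤ) (k : ℕ) (x : ℤ) : Nk Q k x = (sumTuples Q k x).card := by
  rw [Nk, ← Nat.card_eq_finsetCard]
  simp only [mem_sumTuples]

lemma card_sumTuples_one_le_one (Q : Finset ℤ) (y : ℤ) : (sumTuples Q 1 y).card ≤ 1 :=
  card_le_one.2 fun f hf g hg => by
    funext j
    rw [Subsingleton.elim j 0]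
    simp_all

lemma sumTuples_eq_empty_of_nonpos (hQ : ∀ q ∈ Q, 0 < q) (hr : 0 < r) (hy : y ≤ 0) :
    sumTuples Q r y = ∅ := by
  refine eq_empty_of_forall_notMem fun f hf => ?_
  rw [mem_sumTuples] at hf
  have : 0 < ∑ j, f j :=
    sum_pos (fun j _ => hQ _ (hf.1 j)) (univ_nonempty_iff.2 ⟨⟨0, hr⟩⟩)
  omega

end sumTuples

lemma card_sumTuples_biUnion_succ_le (T : Finset ℕ) (Qf : ℕ → Finset ℤ) (r : ℕ) (y : ℤ) :
    (sumTuples (T.biUnion Qf) (r + 1) y).card ≤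
      (r + 1) * ∑ i ∈ T, ∑ q ∈ Qf i,
        (sumTuples ((T.filter (· ≤ i)).biUnion Qf) r (y - q)).card := by
  classical
  have hsub : sumTuples (T.biUnion Qf) (r + 1) y ⊆
      univ.biUnion fun j => T.biUnion fun i => (Qf i).biUnion fun q =>
        (sumTuples ((T.filter (· ≤ i)).biUnion Qf) r (y - q)).image (Fin.insertNth j q) := by
    intro f hf
    rw [mem_sumTuples] at hf
    obtain ⟨hmem, hsum⟩ := hf
    set U := T.filter fun i => ∃ j, f j ∈ Qf i
    have hU : U.Nonempty := by
      obtain ⟨i, hi, h0⟩ := mem_biUnion.1 (hmem 0)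
      exact ⟨i, mem_filter.2 ⟨hi, 0, h0⟩⟩
    obtain ⟨i, hiU, himax⟩ := U.exists_max_image id hU
    obtain ⟨hiT, j, hj⟩ := mem_filter.1 hiU
    simp only [mem_biUnion, mem_image, mem_univ, true_and]
    refine ⟨j, i, hiT, f j, hj, j.removeNth f, ?_, Fin.insertNth_self_removeNth j f⟩
    rw [mem_sumTuples]
    refine ⟨fun l => ?_, ?_⟩
    · obtain ⟨i', hi'T, hi'⟩ := mem_biUnion.1 (hmem (j.succAbove l))
      exact mem_biUnion.2 ⟨i', mem_filter.2 ⟨hi'T, himax i' (mem_filter.2 ⟨hi'T, _, hi'⟩)⟩, hi'⟩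
    · rw [← hsum, Fin.sum_univ_succAbove f j]
      simp [Fin.removeNth]
  calc (sumTuples (T.biUnion Qf) (r + 1) y).card
      ≤ ∑ _j : Fin (r + 1), ∑ i ∈ T, ∑ q ∈ Qf i,
          (sumTuples ((T.filter (· ≤ i)).biUnion Qf) r (y - q)).card := by
        refine (card_le_card hsub).trans <| card_biUnion_le.trans <| sum_le_sum fun j _ => ?_
        refine card_biUnion_le.trans <| sum_le_sum fun i _ => ?_
        exact card_biUnion_le.trans <| sum_le_sum fun q _ => card_image_le
    _ = _ := by simp

noncomputable def scaleWeight (b : ℝ) (c : ℕ) (y : ℝ) : ℝ := 2 ^ (-y / (b * 4 ^ c))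

section scaleWeight

variable {b y : ℝ} {c : ℕ}

lemma scaleWeight_pos : 0 < scaleWeight b c y := Real.rpow_pos_of_pos two_pos _

lemma scaleWeight_le_one (hb : 0 ≤ b) (hy : 0 ≤ y) : scaleWeight b c y ≤ 1 :=
  Real.rpow_le_one_of_one_le_of_nonpos one_le_two
    (div_nonpos_of_nonpos_of_nonneg (neg_nonpos.2 hy) (by positivity))

lemma one_half_le_scaleWeight (hb : 0 < b) (hy : y ≤ b * 4 ^ c) : 1 / 2 ≤ scaleWeight b c y := by
  have hexp : -1 ≤ -y / (b * 4 ^ c) := by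
    rw [neg_div, neg_le_neg_iff, div_le_one (by positivity)]
    exact hy
  calc (1 / 2 : ℝ) = 2 ^ (-1 : ℝ) := by rw [Real.rpow_neg_one]; norm_num
    _ ≤ scaleWeight b c y := Real.rpow_le_rpow_of_exponent_le one_le_two hexp

lemma scaleWeight_sub_le (hb : 0 < b) {q : ℝ} (hq : q ≤ b * 4 ^ c) :
    scaleWeight b c (y - q) ≤ 2 * scaleWeight b c y := by
  have hq' : q / (b * 4 ^ c) ≤ 1 := (div_le_one (by positivity)).2 hq
  calc scaleWeight b c (y - q) ≤ 2 ^ (1 + -y / (b * 4 ^ c)) := by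
        refine Real.rpow_le_rpow_of_exponent_le one_le_two ?_
        rw [show -(y - q) / (b * 4 ^ c) = q / (b * 4 ^ c) + -y / (b * 4 ^ c) by ring]
        linarith
    _ = 2 * scaleWeight b c y := by rw [Real.rpow_add two_pos, Real.rpow_one, scaleWeight]

lemma add_le_mul_four_pow {t : ℝ} (ht : 1 / 2 ≤ t) (d : ℕ) : t + d ≤ t * 4 ^ d := by
  have h := one_add_mul_le_pow (a := (3 : ℝ)) (by norm_num) d
  norm_num at h
  nlinarith [(d.cast_nonneg : (0 : ℝ) ≤ d)]

lemma scaleWeight_le_mul_half_pow (hb : 0 < b) {i j : ℕ} (hij : i ≤ j) (hjc : j ≤ c)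
    (hj : b * 4 ^ j < 2 * y) : scaleWeight b i y ≤ scaleWeight b c y * (1 / 2) ^ (j - i) := by
  obtain ⟨d, rfl⟩ := Nat.exists_eq_add_of_le hij
  rw [Nat.add_sub_cancel_left]
  have hy : 0 < y := by linarith [show 0 < b * 4 ^ (i + d) by positivity]
  set t := y / (b * 4 ^ (i + d))
  have ht : 1 / 2 ≤ t := by
    rw [le_div_iff₀ (by positivity)]; linarith
  have hti : y / (b * 4 ^ i) = t * 4 ^ d := by
    rw [div_mul_eq_mul_div, div_eq_div_iff (by positivity) (by positivity), pow_add]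
    ring
  have htc : y / (b * 4 ^ c) ≤ t :=
    div_le_div_of_nonneg_left hy.le (by positivity)
      (mul_le_mul_of_nonneg_left (pow_le_pow_right₀ (by norm_num) hjc) hb.le)
  calc scaleWeight b i y ≤ 2 ^ (-y / (b * 4 ^ c) + -(d : ℝ)) := by
        refine Real.rpow_le_rpow_of_exponent_le one_le_two ?_
        rw [neg_div, neg_div, hti]
        linarith [add_le_mul_four_pow ht d]
    _ = scaleWeight b c y * (1 / 2) ^ d := by
        rw [Real.rpow_add two_pos, Real.rpow_neg zero_le_two, Real.rpow_natCast, scaleWeight,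
          one_div, inv_pow]

lemma sum_scaleWeight_le (hb : 0 < b) {T : Finset ℕ}
    (hT : ∀ i ∈ T, i ≤ c ∧ b * 4 ^ i < 2 * y) :
    ∑ i ∈ T, scaleWeight b i y ≤ 2 * scaleWeight b c y := by
  rcases T.eq_empty_or_nonempty with rfl | hne
  · simpa using scaleWeight_pos.le
  obtain ⟨j, hjT, hjmax⟩ := T.exists_max_image id hne
  calc ∑ i ∈ T, scaleWeight b i y
      ≤ ∑ i ∈ range (j + 1), scaleWeight b c y * (1 / 2) ^ (j - i) := by
        refine (sum_le_sum fun i hi => ?_).trans <|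
          sum_le_sum_of_subset_of_nonneg (fun i hi => mem_range_succ_iff.2 (hjmax i hi))
            fun _ _ _ => mul_nonneg scaleWeight_pos.le (by positivity)
        exact scaleWeight_le_mul_half_pow hb (hjmax i hi) (hT j hjT).1 (hT j hjT).2
    _ = scaleWeight b c y * ∑ d ∈ range (j + 1), (1 / 2 : ℝ) ^ d := by
        rw [← mul_sum, ← sum_range_reflect (fun d => (1 / 2 : ℝ) ^ d)]
        simp only [add_tsub_cancel_right]
    _ ≤ 2 * scaleWeight b c y := by
        rw [mul_comm]
        exact mul_le_mul_of_nonneg_right (sum_geometric_two_le _) scaleWeight_pos.le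

end scaleWeight

def IsDyadicallyScattered (m : ℕ) (Qf : ℕ → Finset ℤ) (T : Finset ℕ) : Prop :=
  ∀ i ∈ T, ∀ q ∈ Qf i, (4 ^ i * m : ℤ) < 2 * q ∧ q ≤ 4 ^ i * m

namespace IsDyadicallyScattered

variable {m M : ℕ} {Qf : ℕ → Finset ℤ} {T : Finset ℕ}

lemma mono (h : IsDyadicallyScattered m Qf T) {T' : Finset ℕ} (hT' : T' ⊆ T) :
    IsDyadicallyScattered m Qf T' :=
  fun i hi => h i (hT' hi)

lemma pos (h : IsDyadicallyScattered m Qf T) : ∀ q ∈ T.biUnion Qf, 0 < q := by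
  intro q hq
  obtain ⟨i, hi, hq⟩ := mem_biUnion.1 hq
  have : (0 : ℤ) ≤ 4 ^ i * m := by positivity
  linarith [(h i hi q hq).1]

lemma le_of_mem (h : IsDyadicallyScattered m Qf T) {i : ℕ} (hi : i ∈ T) {q : ℤ} (hq : q ∈ Qf i) :
    (q : ℝ) ≤ m * 4 ^ i := by
  rw [mul_comm]; exact_mod_cast (h i hi q hq).2

lemma card_sumTuples_one_le (hm : 0 < m) (h : IsDyadicallyScattered m Qf T) {c : ℕ}
    (hc : ∀ i ∈ T, i ≤ c) (y : ℤ) :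
    ((sumTuples (T.biUnion Qf) 1 y).card : ℝ) ≤ 4 * scaleWeight m c y := by
  rcases (sumTuples (T.biUnion Qf) 1 y).eq_empty_or_nonempty with hempty | ⟨f, hf⟩
  · rw [hempty, card_empty, Nat.cast_zero]
    exact mul_nonneg zero_le_four scaleWeight_pos.le
  obtain ⟨hmem, hsum⟩ := mem_sumTuples.1 hf
  rw [Fin.sum_univ_one] at hsum
  obtain ⟨i, hi, hfi⟩ := mem_biUnion.1 (hmem 0)
  have hy : (y : ℝ) ≤ m * 4 ^ c := calc
    (y : ℝ) ≤ m * 4 ^ i := hsum ▸ h.le_of_mem hi hfi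
    _ ≤ m * 4 ^ c := by gcongr; norm_num; exact hc i hi
  have hcard : ((sumTuples (T.biUnion Qf) 1 y).card : ℝ) ≤ 1 := by
    exact_mod_cast card_sumTuples_one_le_one _ y
  linarith [one_half_le_scaleWeight (c := c) (by exact_mod_cast hm) hy]

lemma sum_card_sumTuples_sub_eq_zero (h : IsDyadicallyScattered m Qf T) {r : ℕ} (hr : 0 < r)
    {y : ℤ} {i : ℕ} (hi : i ∈ T) (hyi : 2 * y ≤ 4 ^ i * m) :
    ∑ q ∈ Qf i, (sumTuples ((T.filter (· ≤ i)).biUnion Qf) r (y - q)).card = 0 := by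
  refine sum_eq_zero fun q hq => card_eq_zero.2 ?_
  exact sumTuples_eq_empty_of_nonpos ((h.mono (filter_subset _ T)).pos) hr
    (by linarith [(h i hi q hq).1])

lemma sum_card_sumTuples_sub_le (hm : 0 < m) (h : IsDyadicallyScattered m Qf T) {i : ℕ}
    (hi : i ∈ T) (hcard : (Qf i).card ≤ M) {P : Finset ℤ} {r : ℕ} {K : ℝ} (hK : 0 ≤ K)
    (hP : ∀ z : ℤ, ((sumTuples P r z).card : ℝ) ≤ K * scaleWeight m i z) (y : ℤ) :
    ∑ q ∈ Qf i, ((sumTuples P r (y - q)).card : ℝ) ≤ M * (K * (2 * scaleWeight m i y)) := by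
  calc ∑ q ∈ Qf i, ((sumTuples P r (y - q)).card : ℝ)
      ≤ (Qf i).card • (K * (2 * scaleWeight m i y)) := by
        refine sum_le_card_nsmul _ _ _ fun q hq => (hP (y - q)).trans ?_
        rw [Int.cast_sub]
        exact mul_le_mul_of_nonneg_left
          (scaleWeight_sub_le (by exact_mod_cast hm) (h.le_of_mem hi hq)) hK
    _ ≤ M * (K * (2 * scaleWeight m i y)) := by
        rw [nsmul_eq_mul]
        exact mul_le_mul_of_nonneg_right (by exact_mod_cast hcard)
          (mul_nonneg hK (mul_nonneg zero_le_two scaleWeight_pos.le))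

lemma card_sumTuples_succ_le (hm : 0 < m) {r : ℕ} (hr : 0 < r) {K : ℝ} (hK : 0 ≤ K)
    (ih : ∀ {T : Finset ℕ} {c : ℕ}, IsDyadicallyScattered m Qf T → (∀ i ∈ T, i ≤ c) →
      (∀ i ∈ T, (Qf i).card ≤ M) →
      ∀ y : ℤ, ((sumTuples (T.biUnion Qf) r y).card : ℝ) ≤ K * scaleWeight m c y)
    (h : IsDyadicallyScattered m Qf T) {c : ℕ} (hc : ∀ i ∈ T, i ≤ c)
    (hcard : ∀ i ∈ T, (Qf i).card ≤ M) (y : ℤ) :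
    ((sumTuples (T.biUnion Qf) (r + 1) y).card : ℝ) ≤ 4 * (r + 1) * M * K * scaleWeight m c y := by
  set N : ℕ → ℤ → ℕ := fun i z => (sumTuples ((T.filter (· ≤ i)).biUnion Qf) r z).card
  set T' := T.filter fun i => (4 ^ i * m : ℤ) < 2 * y
  have hvanish : ∀ i ∈ T, ∑ q ∈ Qf i, (N i (y - q) : ℝ) ≠ 0 → (4 ^ i * m : ℤ) < 2 * y := by
    refine fun i hi hne => not_le.1 fun hyi => hne ?_
    exact_mod_cast h.sum_card_sumTuples_sub_eq_zero hr hi hyi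
  have hscale : ∀ i ∈ T', ∑ q ∈ Qf i, (N i (y - q) : ℝ) ≤ M * (K * (2 * scaleWeight m i y)) := by
    intro i hi
    have hiT := (mem_filter.1 hi).1
    exact h.sum_card_sumTuples_sub_le hm hiT (hcard i hiT) hK
      (ih (h.mono (filter_subset _ T)) (fun i' hi' => (mem_filter.1 hi').2)
        (fun i' hi' => hcard i' (mem_filter.1 hi').1)) y
  have hgeom : ∑ i ∈ T', scaleWeight m i y ≤ 2 * scaleWeight m c y := by
    refine sum_scaleWeight_le (by exact_mod_cast hm) fun i hi => ⟨hc i (mem_filter.1 hi).1, ?_⟩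
    rw [mul_comm]; exact_mod_cast (mem_filter.1 hi).2
  calc ((sumTuples (T.biUnion Qf) (r + 1) y).card : ℝ)
      ≤ (r + 1) * ∑ i ∈ T, ∑ q ∈ Qf i, (N i (y - q) : ℝ) := by
        exact_mod_cast card_sumTuples_biUnion_succ_le T Qf r y
    _ = (r + 1) * ∑ i ∈ T', ∑ q ∈ Qf i, (N i (y - q) : ℝ) := by rw [← sum_filter_of_ne hvanish]
    _ ≤ (r + 1) * ∑ i ∈ T', M * (K * (2 * scaleWeight m i y)) := by
        gcongr with i hi; exact hscale i hi
    _ = 2 * (r + 1) * M * K * ∑ i ∈ T', scaleWeight m i y := by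
        rw [← mul_sum, ← mul_sum, ← mul_sum]; ring
    _ ≤ 2 * (r + 1) * M * K * (2 * scaleWeight m c y) := by gcongr
    _ = 4 * (r + 1) * M * K * scaleWeight m c y := by ring

theorem card_sumTuples_le (hm : 0 < m) {r : ℕ} (hr : 0 < r) (h : IsDyadicallyScattered m Qf T)
    {c : ℕ} (hc : ∀ i ∈ T, i ≤ c) (hcard : ∀ i ∈ T, (Qf i).card ≤ M) (y : ℤ) :
    ((sumTuples (T.biUnion Qf) r y).card : ℝ) ≤ M ^ (r - 1) * r ! * 4 ^ r * scaleWeight m c y := by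
  induction r, hr using Nat.le_induction generalizing T c y with
  | base => simpa using h.card_sumTuples_one_le hm hc y
  | succ r hr ih =>
    calc ((sumTuples (T.biUnion Qf) (r + 1) y).card : ℝ)
        ≤ 4 * (r + 1) * M * (M ^ (r - 1) * r ! * 4 ^ r) * scaleWeight m c y :=
          card_sumTuples_succ_le hm hr (by positivity) (fun h' hc' hcard' => ih h' hc' hcard') h hc
            hcard y
      _ = M ^ (r + 1 - 1) * (r + 1) ! * 4 ^ (r + 1) * scaleWeight m c y := by
          obtain ⟨s, rfl⟩ := Nat.exists_eq_add_of_le hr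
          simp only [Nat.factorial_succ, add_tsub_cancel_right, add_tsub_cancel_left]
          push_cast
          ring

end IsDyadicallyScattered

theorem Nk_scattered_general (k m M : ℕ) (hk : 0 < k) (hm : 0 < m)
    (S : Finset ℕ) (Qf : ℕ → Finset ℤ)
    (hrange : ∀ i ∈ S, ∀ x ∈ Qf i, (4 ^ i * m : ℤ) < 2 * x ∧ x ≤ (4 ^ i * m : ℤ))
    (hcard : ∀ i ∈ S, (Qf i).card = M)
    (Q : Finset ℤ) (hQ : Q = S.biUnion Qf) :
    ∀ x : ℤ, Nk Q k x ≤ 2 ^ (6 * k) * k ^ k * M ^ (k - 1) := by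
  intro x
  subst hQ
  rw [Nk_eq_card_sumTuples]
  have hscattered : IsDyadicallyScattered m Qf S := hrange
  have hcount : (sumTuples (S.biUnion Qf) k x).card ≤ M ^ (k - 1) * k ! * 4 ^ k := by
    rcases le_or_gt x 0 with hx | hx
    · rw [sumTuples_eq_empty_of_nonpos hscattered.pos hk hx, card_empty]
      exact Nat.zero_le _
    have hbound := hscattered.card_sumTuples_le hm hk (fun i hi => le_sup (f := id) hi)
      (fun i hi => (hcard i hi).le) x
    have hweight := scaleWeight_le_one (c := S.sup id) (Nat.cast_nonneg m) (Int.cast_nonneg hx.le)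
    exact_mod_cast hbound.trans (mul_le_of_le_one_right (by positivity) hweight)
  calc _ ≤ M ^ (k - 1) * k ! * 4 ^ k := hcount
    _ ≤ M ^ (k - 1) * k ^ k * (2 ^ 6) ^ k := by
        gcongr
        · exact Nat.factorial_le_pow k
        · norm_num
    _ = 2 ^ (6 * k) * k ^ k * M ^ (k - 1) := by rw [← pow_mul]; ring

theorem Nk_scattered (I k m M : ℕ) (hI : 0 < I) (hk : 0 < k) (hm : 0 < m) (hM : 0 < M)
    (S : Finset ℕ) (hS : S.card = I) (hSpos : ∀ i ∈ S, 0 < i) (Qf : ℕ → Finset ℤ)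
    (hdisj : ∀ i ∈ S, ∀ j ∈ S, i ≠ j → Disjoint (Qf i) (Qf j))
    (hrange : ∀ i ∈ S, ∀ x ∈ Qf i, (4 ^ i * m : ℤ) < 2 * x ∧ x ≤ (4 ^ i * m : ℤ))
    (hcard : ∀ i ∈ S, (Qf i).card = M)
    (Q : Finset ℤ) (hQ : Q = S.biUnion Qf) :
    ∀ x : ℤ, Nk Q k x ≤ 2 ^ (6 * k) * k ^ k * M ^ (k - 1) :=
  Nk_scattered_general k m M hk hm S Qf hrange hcard Q hQ
end
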